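/- arXiv:1501.00703 — 5 statements merged into one kernel-verified Lean document; each statement's English description precedes it below -/
import Mathlib

section
/- A Q-category E is tensored (i.e., for every object X and every arrow u : |X| → T in Q there is an object u⋆X of extent T with E(u⋆X, Z) = E(X,Z) ↙ u for all Z) if and only if for every object X the Q-functor E(X,−) : E → P{|X|} has a left adjoint. -/
/-! Common framework: quantaloids and quantaloid-enriched categories. -/

universe u v w w₂

structure Quantaloid (Obj : Type u) : Type (max u (v + 1)) where
  Hom : Obj → Obj → Type v
  [lat : ∀ S T : Obj, CompleteLattice (Hom S T)]
  comp : ∀ {S T U : Obj}, Hom T U → Hom S T → Hom S U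
  one : ∀ S : Obj, Hom S S
  comp_assoc : ∀ {S T U V : Obj} (x : Hom U V) (y : Hom T U) (z : Hom S T),
    comp (comp x y) z = comp x (comp y z)
  one_comp : ∀ {S T : Obj} (u : Hom S T), comp (one T) u = u
  comp_one : ∀ {S T : Obj} (u : Hom S T), comp u (one S) = u
  comp_sSup : ∀ {S T U : Obj} (v : Hom T U) (s : Set (Hom S T)),
    comp v (sSup s) = ⨆ u ∈ s, comp v u
  sSup_comp : ∀ {S T U : Obj} (s : Set (Hom T U)) (u : Hom S T),
    comp (sSup s) u = ⨆ v ∈ s, comp v u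

attribute [instance] Quantaloid.lat

namespace Quantaloid

variable {Obj : Type u} (Q : Quantaloid Obj)

/-- Right extension `w ↙ u`. -/
def rext {S T U : Obj} (w : Q.Hom S U) (u : Q.Hom S T) : Q.Hom T U :=
  sSup {v : Q.Hom T U | Q.comp v u ≤ w}

/-- Right lifting `v ↘ w`. -/
def rlift {S T U : Obj} (v : Q.Hom T U) (w : Q.Hom S U) : Q.Hom S T :=
  sSup {u : Q.Hom S T | Q.comp v u ≤ w}

/-- Transport of a hom-arrow along equalities of objects. -/
def cast2 {S S' T T' : Obj} (hS : S = S') (hT : T = T') (u : Q.Hom S T) : Q.Hom S' T' := by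
  subst hS; subst hT; exact u

variable {Q}

theorem comp_le_comp_left {S T U : Obj} {v v' : Q.Hom T U} (h : v ≤ v') (u : Q.Hom S T) :
    Q.comp v u ≤ Q.comp v' u := by
  have h2 : (sSup {v, v'} : Q.Hom T U) = v' := by rw [sSup_pair, sup_eq_right.mpr h]
  calc Q.comp v u ≤ ⨆ x ∈ ({v, v'} : Set (Q.Hom T U)), Q.comp x u :=
        le_iSup₂ (f := fun x (_ : x ∈ ({v, v'} : Set (Q.Hom T U))) => Q.comp x u) v (by simp)
  _ = Q.comp v' u := by rw [← Q.sSup_comp, h2]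

theorem comp_le_comp_right {S T U : Obj} (v : Q.Hom T U) {u u' : Q.Hom S T} (h : u ≤ u') :
    Q.comp v u ≤ Q.comp v u' := by
  have h2 : (sSup {u, u'} : Q.Hom S T) = u' := by rw [sSup_pair, sup_eq_right.mpr h]
  calc Q.comp v u ≤ ⨆ x ∈ ({u, u'} : Set (Q.Hom S T)), Q.comp v x :=
        le_iSup₂ (f := fun x (_ : x ∈ ({u, u'} : Set (Q.Hom S T))) => Q.comp v x) u (by simp)
  _ = Q.comp v u' := by rw [← Q.comp_sSup, h2]

theorem le_rext_iff {S T U : Obj} {w : Q.Hom S U} {u : Q.Hom S T} {v : Q.Hom T U} :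
    v ≤ Q.rext w u ↔ Q.comp v u ≤ w := by
  constructor
  · intro h
    refine le_trans (comp_le_comp_left h u) ?_
    rw [Quantaloid.rext, Q.sSup_comp]
    exact iSup₂_le fun x hx => hx
  · intro h; exact le_sSup h

theorem le_rlift_iff {S T U : Obj} {v : Q.Hom T U} {w : Q.Hom S U} {u' : Q.Hom S T} :
    u' ≤ Q.rlift v w ↔ Q.comp v u' ≤ w := by
  constructor
  · intro h
    refine le_trans (comp_le_comp_right v h) ?_
    rw [Quantaloid.rlift, Q.comp_sSup]
    exact iSup₂_le fun x hx => hx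
  · intro h; exact le_sSup h

/-- The opposite quantaloid. -/
def op (Q : Quantaloid Obj) : Quantaloid Obj where
  Hom S T := Q.Hom T S
  lat S T := Q.lat T S
  comp v u := Q.comp u v
  one := Q.one
  comp_assoc x y z := (Q.comp_assoc z y x).symm
  one_comp u := Q.comp_one u
  comp_one u := Q.one_comp u
  comp_sSup v s := Q.sSup_comp s v
  sSup_comp s u := Q.comp_sSup u s

end Quantaloid

/-- A (possibly large) `Q`-category. -/
structure QCat {Obj : Type u} (Q : Quantaloid.{u, v} Obj) : Type (max u v (w + 1)) where
  Ob : Type w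
  ext : Ob → Obj
  hom : ∀ X Y : Ob, Q.Hom (ext X) (ext Y)
  id_le : ∀ X : Ob, Q.one (ext X) ≤ hom X X
  comp_le : ∀ X Y Z : Ob, Q.comp (hom Y Z) (hom X Y) ≤ hom X Z

variable {Obj : Type u} {Q : Quantaloid.{u, v} Obj}

/-- The dual `Q^op`-category. -/
def QCat.op (E : QCat.{u, v, w} Q) : QCat.{u, v, w} Q.op where
  Ob := E.Ob
  ext := E.ext
  hom X Y := E.hom Y X
  id_le X := E.id_le X
  comp_le X Y Z := E.comp_le Z Y X

/-- A (contravariant) presheaf on a `Q`-category. -/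
structure Presheaf (E : QCat.{u, v, w} Q) : Type (max u v w) where
  ext : Obj
  arr : ∀ X : E.Ob, Q.Hom (E.ext X) ext
  compat : ∀ X X' : E.Ob, Q.comp (arr X) (E.hom X' X) ≤ arr X'

/-- A covariant presheaf on a `Q`-category. -/
structure Copresheaf (E : QCat.{u, v, w} Q) : Type (max u v w) where
  ext : Obj
  arr : ∀ X : E.Ob, Q.Hom ext (E.ext X)
  compat : ∀ X X' : E.Ob, Q.comp (E.hom X X') (arr X) ≤ arr X'

/-- Hom-arrows of the presheaf `Q`-category `PE`. -/
def PEhom {E : QCat.{u, v, w} Q} (φ ψ : Presheaf E) : Q.Hom φ.ext ψ.ext :=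
  ⨅ X : E.Ob, Q.rext (ψ.arr X) (φ.arr X)

/-- Hom-arrows of the covariant presheaf `Q`-category `P†E`. -/
def coPEhom {E : QCat.{u, v, w} Q} (ψ ψ' : Copresheaf E) : Q.Hom ψ.ext ψ'.ext :=
  ⨅ X : E.Ob, Q.rlift (ψ'.arr X) (ψ.arr X)

/-- The Yoneda embedding on objects: the representable presheaf. -/
def yonedaP (E : QCat.{u, v, w} Q) (Z : E.Ob) : Presheaf E where
  ext := E.ext Z
  arr X := E.hom X Z
  compat X X' := E.comp_le X' X Z

theorem PE_id_le {E : QCat.{u, v, w} Q} (φ : Presheaf E) : Q.one φ.ext ≤ PEhom φ φ :=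
  le_iInf fun X => Quantaloid.le_rext_iff.mpr (by rw [Q.one_comp])

theorem PE_comp_le {E : QCat.{u, v, w} Q} (φ ψ χ : Presheaf E) :
    Q.comp (PEhom ψ χ) (PEhom φ ψ) ≤ PEhom φ χ :=
  le_iInf fun X => Quantaloid.le_rext_iff.mpr (by
    rw [Q.comp_assoc]
    exact le_trans
      (Quantaloid.comp_le_comp_right (v := PEhom ψ χ) (u' := ψ.arr X)
        (Quantaloid.le_rext_iff.mp (iInf_le _ X)))
      (Quantaloid.le_rext_iff.mp (iInf_le _ X)))

/-- `Y` is a supremum of the presheaf `φ`. -/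
def IsSup (E : QCat.{u, v, w} Q) (φ : Presheaf E) (Y : E.Ob) : Prop :=
  ∃ h : φ.ext = E.ext Y, ∀ Z : E.Ob,
    Q.cast2 h.symm rfl (E.hom Y Z) = ⨅ X : E.Ob, Q.rext (E.hom X Z) (φ.arr X)

/-- Totality: every presheaf has a supremum. -/
def QTotal (E : QCat.{u, v, w} Q) : Prop := ∀ φ : Presheaf E, ∃ Y : E.Ob, IsSup E φ Y

/-- `Y` is a tensor `u ⋆ X`. -/
def IsTensor (E : QCat.{u, v, w} Q) (X : E.Ob) {T : Obj} (u : Q.Hom (E.ext X) T) (Y : E.Ob) : Prop :=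
  ∃ h : T = E.ext Y, ∀ Z : E.Ob,
    Q.cast2 h.symm rfl (E.hom Y Z) = Q.rext (E.hom X Z) u

def Tensored (E : QCat.{u, v, w} Q) : Prop :=
  ∀ (X : E.Ob) (T : Obj) (u : Q.Hom (E.ext X) T), ∃ Y : E.Ob, IsTensor E X u Y

/-- Conical cocompleteness: joins of representables have suprema. -/
def ConicallyCocomplete (E : QCat.{u, v, w} Q) : Prop :=
  ∀ (T : Obj) (ι : Type w) (Y : ι → E.Ob) (e : ∀ i, E.ext (Y i) = T)
    (ψ : Presheaf E) (hψ : ψ.ext = T),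
    (∀ X : E.Ob, ψ.arr X = Q.cast2 rfl hψ.symm (⨆ i, Q.cast2 rfl (e i) (E.hom X (Y i)))) →
    ∃ Y0 : E.Ob, IsSup E ψ Y0

/-- A `Q`-functor. -/
structure QFun (E : QCat.{u, v, w} Q) (D : QCat.{u, v, w₂} Q) : Type (max u w w₂) where
  obj : E.Ob → D.Ob
  ext_eq : ∀ X : E.Ob, E.ext X = D.ext (obj X)
  le_hom : ∀ X Y : E.Ob,
    E.hom X Y ≤ Q.cast2 (ext_eq X).symm (ext_eq Y).symm (D.hom (obj X) (obj Y))

def FullyFaithful {E : QCat.{u, v, w} Q} {D : QCat.{u, v, w₂} Q} (F : QFun E D) : Prop :=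
  ∀ X Y : E.Ob,
    Q.cast2 (F.ext_eq X).symm (F.ext_eq Y).symm (D.hom (F.obj X) (F.obj Y)) = E.hom X Y

/-- A `Q`-distributor. -/
structure QDist (E D : QCat.{u, v, w} Q) : Type (max u v w) where
  d : ∀ (X : E.Ob) (Y : D.Ob), Q.Hom (E.ext X) (D.ext Y)
  compat : ∀ (X X' : E.Ob) (Y Y' : D.Ob),
    Q.comp (D.hom Y Y') (Q.comp (d X Y) (E.hom X' X)) ≤ d X' Y'

/-- The identity distributor of a `Q`-category. -/
def homDist (E : QCat.{u, v, w} Q) : QDist E E where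
  d := E.hom
  compat X X' Y Y' :=
    le_trans (Quantaloid.comp_le_comp_right _ (E.comp_le X' X Y)) (E.comp_le X' Y Y')

/-- The Isbell closure `Φ↓Φ↑φ`, computed pointwise. -/
def isbell {E B : QCat.{u, v, w} Q} (Φ : QDist E B) (φ : Presheaf E) (X : E.Ob) :
    Q.Hom (E.ext X) φ.ext :=
  ⨅ Y : B.Ob, Q.rlift (⨅ X' : E.Ob, Q.rext (Φ.d X' Y) (φ.arr X')) (Φ.d X Y)

/-- The Isbell `Q`-category of a distributor: fixed points of `Φ↓Φ↑`. -/
def ICat {E B : QCat.{u, v, w} Q} (Φ : QDist E B) : QCat.{u, v, max u v w} Q where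
  Ob := {φ : Presheaf E // ∀ X : E.Ob, isbell Φ φ X = φ.arr X}
  ext φ := φ.1.ext
  hom φ ψ := PEhom φ.1 ψ.1
  id_le φ := PE_id_le φ.1
  comp_le φ ψ χ := PE_comp_le φ.1 ψ.1 χ.1

/-- The fibre of a `Q`-category over `T`. -/
def Fib (E : QCat.{u, v, w} Q) (T : Obj) := {X : E.Ob // E.ext X = T}

def fibLE {E : QCat.{u, v, w} Q} {T : Obj} (X Y : Fib E T) : Prop :=
  Q.one T ≤ Q.cast2 X.2 Y.2 (E.hom X.1 Y.1)

def IsFibJoin {E : QCat.{u, v, w} Q} {T : Obj} (s : Set (Fib E T)) (Y : Fib E T) : Prop :=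
  (∀ X ∈ s, fibLE X Y) ∧ ∀ Z : Fib E T, (∀ X ∈ s, fibLE X Z) → fibLE Y Z

def OrderComplete (E : QCat.{u, v, w} Q) : Prop :=
  ∀ (T : Obj) (s : Set (Fib E T)), ∃ Y : Fib E T, IsFibJoin s Y

/-- A right adjoint to a `Q`-functor. -/
structure RAdj {E D : QCat.{u, v, w} Q} (F : QFun E D) : Type (max u w) where
  G : D.Ob → E.Ob
  ext_eq : ∀ Y : D.Ob, D.ext Y = E.ext (G Y)
  functor : ∀ Y Y' : D.Ob,
    D.hom Y Y' ≤ Q.cast2 (ext_eq Y).symm (ext_eq Y').symm (E.hom (G Y) (G Y'))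
  adj : ∀ (X : E.Ob) (Y : D.Ob),
    Q.cast2 rfl (ext_eq Y).symm (E.hom X (G Y)) =
      Q.cast2 (F.ext_eq X).symm rfl (D.hom (F.obj X) Y)

/-- A left adjoint to a `Q`-functor. -/
structure LAdjTo {A C : QCat.{u, v, w} Q} (J : QFun A C) : Type (max u w) where
  L : C.Ob → A.Ob
  ext_eq : ∀ Y : C.Ob, C.ext Y = A.ext (L Y)
  functor : ∀ Y Y' : C.Ob,
    C.hom Y Y' ≤ Q.cast2 (ext_eq Y).symm (ext_eq Y').symm (A.hom (L Y) (L Y'))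
  adj : ∀ (Y : C.Ob) (X : A.Ob),
    Q.cast2 (ext_eq Y).symm rfl (A.hom (L Y) X) =
      Q.cast2 rfl (J.ext_eq X).symm (C.hom Y (J.obj X))

/-- A left adjoint to the Yoneda functor. -/
structure YonedaLAdj (E : QCat.{u, v, w} Q) : Type (max u v w) where
  L : Presheaf E → E.Ob
  ext_eq : ∀ φ : Presheaf E, φ.ext = E.ext (L φ)
  functor : ∀ φ ψ : Presheaf E,
    PEhom φ ψ ≤ Q.cast2 (ext_eq φ).symm (ext_eq ψ).symm (E.hom (L φ) (L ψ))
  adj : ∀ (φ : Presheaf E) (Z : E.Ob),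
    Q.cast2 (ext_eq φ).symm rfl (E.hom (L φ) Z) = PEhom φ (yonedaP E Z)

/-- A left adjoint to `E(X,−) : E → P{|X|}`. -/
structure TensorLAdj (E : QCat.{u, v, w} Q) (X : E.Ob) : Type (max u v w) where
  L : ∀ {T : Obj}, Q.Hom (E.ext X) T → E.Ob
  ext_eq : ∀ {T : Obj} (u : Q.Hom (E.ext X) T), T = E.ext (L u)
  functor : ∀ {T U : Obj} (u : Q.Hom (E.ext X) T) (v : Q.Hom (E.ext X) U),
    Q.rext v u ≤ Q.cast2 (ext_eq u).symm (ext_eq v).symm (E.hom (L u) (L v))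
  adj : ∀ {T : Obj} (u : Q.Hom (E.ext X) T) (Z : E.Ob),
    Q.cast2 (ext_eq u).symm rfl (E.hom (L u) Z) = Q.rext (E.hom X Z) u

/-- A `Q`-functor into the presheaf category `PE`. -/
structure QPFun (C E : QCat.{u, v, w} Q) : Type (max u v w) where
  obj : C.Ob → Presheaf E
  ext_eq : ∀ Z : C.Ob, C.ext Z = (obj Z).ext
  le_hom : ∀ Z Z' : C.Ob,
    C.hom Z Z' ≤ Q.cast2 (ext_eq Z).symm (ext_eq Z').symm (PEhom (obj Z) (obj Z'))

/-- Two objects of a `Q`-category are isomorphic. -/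
def ObIso (B : QCat.{u, v, w} Q) (Y Y' : B.Ob) : Prop :=
  ∃ h : B.ext Y = B.ext Y',
    (Q.one (B.ext Y) ≤ Q.cast2 rfl h.symm (B.hom Y Y')) ∧
    (Q.one (B.ext Y) ≤ Q.cast2 h.symm rfl (B.hom Y' Y))

/-- Equivalence of `Q`-categories. -/
def QEquiv (A : QCat.{u, v, w} Q) (B : QCat.{u, v, w₂} Q) : Prop :=
  ∃ F : QFun A B, FullyFaithful F ∧ ∀ Y : B.Ob, ∃ X : A.Ob, ObIso B (F.obj X) Y

/-- `Y` is the weighted colimit `φ ⋆ J`. -/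
def IsWeightedColim {E : QCat.{u, v, w} Q} {C : QCat.{u, v, w₂} Q} (J : QFun E C) (φ : Presheaf E) (Y : C.Ob) : Prop :=
  ∃ h : φ.ext = C.ext Y, ∀ Z : C.Ob,
    Q.cast2 h.symm rfl (C.hom Y Z) =
      ⨅ X : E.Ob, Q.rext (Q.cast2 (J.ext_eq X).symm rfl (C.hom (J.obj X) Z)) (φ.arr X)

/-- `Y` is the weighted limit `ψ ⤳ J`. -/
def IsWeightedLim {E : QCat.{u, v, w} Q} {C : QCat.{u, v, w₂} Q} (J : QFun E C) (ψ : Copresheaf E) (Y : C.Ob) : Prop :=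
  ∃ h : ψ.ext = C.ext Y, ∀ Z : C.Ob,
    Q.cast2 rfl h.symm (C.hom Z Y) =
      ⨅ X : E.Ob, Q.rlift (ψ.arr X) (Q.cast2 rfl (J.ext_eq X).symm (C.hom Z (J.obj X)))

/-- `HG ≅ F` for `Q`-functors. -/
def CompIso {C D E : QCat.{u, v, w} Q} (G : QFun C D) (H : QFun D E) (F : QFun C E) : Prop :=
  (∀ X : C.Ob, Q.one (C.ext X) ≤
    Q.cast2 ((G.ext_eq X).trans (H.ext_eq (G.obj X))).symm (F.ext_eq X).symm
      (E.hom (H.obj (G.obj X)) (F.obj X))) ∧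
  (∀ X : C.Ob, Q.one (C.ext X) ≤
    Q.cast2 (F.ext_eq X).symm ((G.ext_eq X).trans (H.ext_eq (G.obj X))).symm
      (E.hom (F.obj X) (H.obj (G.obj X))))

theorem stmt7_aux {Obj : Type u} {Q : Quantaloid.{u, v} Obj} (E : QCat.{u, v, w} Q)
    {X Y Z : E.Ob} {T U : Obj} (u : Q.Hom (E.ext X) T) (v : Q.Hom (E.ext X) U)
    (hu : T = E.ext Y) (hv : U = E.ext Z)
    (adjY : ∀ W : E.Ob, Q.cast2 hu.symm rfl (E.hom Y W) = Q.rext (E.hom X W) u)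
    (adjZ : ∀ W : E.Ob, Q.cast2 hv.symm rfl (E.hom Z W) = Q.rext (E.hom X W) v) :
    Q.rext v u ≤ Q.cast2 hu.symm hv.symm (E.hom Y Z) := by
  subst hu; subst hv
  have eY : E.hom Y Z = Q.rext (E.hom X Z) u := adjY Z
  have eZ : E.hom Z Z = Q.rext (E.hom X Z) v := adjZ Z
  show Q.rext v u ≤ E.hom Y Z
  rw [eY, Quantaloid.le_rext_iff]
  have hv' : v ≤ E.hom X Z := by
    have h1 : Q.one (E.ext Z) ≤ Q.rext (E.hom X Z) v := eZ ▸ E.id_le Z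
    have := Quantaloid.le_rext_iff.mp h1
    rwa [Q.one_comp] at this
  calc Q.comp (Q.rext v u) u ≤ v := Quantaloid.le_rext_iff.mp le_rfl
    _ ≤ E.hom X Z := hv'

theorem stmt7 {Obj : Type u} {Q : Quantaloid.{u, v} Obj} (E : QCat.{u, v, w} Q) :
    Tensored E ↔ ∀ X : E.Ob, Nonempty (TensorLAdj E X) := by
  constructor
  · intro hT X
    refine ⟨⟨fun {T} u => (hT X T u).choose,
      fun {T} u => (hT X T u).choose_spec.choose, ?_, ?_⟩⟩
    · intro T U u v
      exact stmt7_aux E u v (hT X T u).choose_spec.choose (hT X U v).choose_spec.choose (hT X T u).choose_spec.choose_spec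
        (hT X U v).choose_spec.choose_spec
    · intro T u Z
      exact (hT X T u).choose_spec.choose_spec Z
  · intro h X T u
    obtain ⟨F⟩ := h X
    exact ⟨F.L u, F.ext_eq u, F.adj u⟩
end

section
/- If a Q-category E is tensored and conically cocomplete, then E has suprema of all presheaves: for every presheaf φ of extent T, the object sup ψ, where ψ = ⋁_{X ∈ ob E} E(−, φ_X ⋆ X), is a supremum of φ, i.e., E(sup ψ, Z) = ⋀_{X} E(X,Z) ↙ φ_X for all Z. -/
/-! Common framework: quantaloids and quantaloid-enriched categories. -/

universe u v w w₂

variable {Obj : Type u} {Q : Quantaloid.{u, v} Obj}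

section Aux

variable {Obj : Type u} {Q : Quantaloid.{u, v} Obj}

theorem aux_cast2_mono {S S' T T' : Obj} (hS : S = S') (hT : T = T') {u v : Q.Hom S T}
    (h : u ≤ v) : Q.cast2 hS hT u ≤ Q.cast2 hS hT v := by subst hS; subst hT; exact h

theorem aux_comp_cast_left {S T U U' : Obj} (h : U = U') (v : Q.Hom T U) (u : Q.Hom S T) :
    Q.comp (Q.cast2 rfl h v) u = Q.cast2 rfl h (Q.comp v u) := by subst h; rfl

theorem aux_rext_cast {S T T' U : Obj} (h : T = T') (w : Q.Hom S U) (u : Q.Hom S T) :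
    Q.rext w (Q.cast2 rfl h u) = Q.cast2 h rfl (Q.rext w u) := by subst h; rfl

theorem aux_cast2_iInf {T T' S : Obj} (h : T = T') {ι : Sort _} (f : ι → Q.Hom T S) :
    Q.cast2 h rfl (⨅ i, f i) = ⨅ i, Q.cast2 h rfl (f i) := by subst h; rfl

theorem aux_comp_iSup {S T U : Obj} {ι : Sort _} (v : Q.Hom T U) (u : ι → Q.Hom S T) :
    Q.comp v (⨆ i, u i) = ⨆ i, Q.comp v (u i) := by
  rw [iSup, Q.comp_sSup, iSup_range]

theorem aux_iSup_comp {S T U : Obj} {ι : Sort _} (v : ι → Q.Hom T U) (u : Q.Hom S T) :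
    Q.comp (⨆ i, v i) u = ⨆ i, Q.comp (v i) u := by
  rw [iSup, Q.sSup_comp, iSup_range]

theorem aux_comp_rext_le {S T U : Obj} (w : Q.Hom S U) (u : Q.Hom S T) :
    Q.comp (Q.rext w u) u ≤ w :=
  Quantaloid.le_rext_iff.mp le_rfl

theorem aux_rext_iSup {S T U : Obj} {ι : Sort _} (w : Q.Hom S U) (u : ι → Q.Hom S T) :
    Q.rext w (⨆ i, u i) = ⨅ i, Q.rext w (u i) := by
  apply le_antisymm
  · refine le_iInf fun i => Quantaloid.le_rext_iff.mpr ?_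
    exact le_trans
      (Quantaloid.comp_le_comp_right _ (le_iSup u i)) (aux_comp_rext_le w _)
  · refine Quantaloid.le_rext_iff.mpr ?_
    rw [aux_comp_iSup]
    refine iSup_le fun i => ?_
    exact le_trans (Quantaloid.comp_le_comp_left (iInf_le _ i) _) (aux_comp_rext_le w _)

theorem aux_yoneda (E : QCat.{u, v, w} Q) (Y Z : E.Ob) :
    (⨅ W : E.Ob, Q.rext (E.hom W Z) (E.hom W Y)) = E.hom Y Z := by
  apply le_antisymm
  · refine le_trans (iInf_le _ Y) ?_
    have h1 : Q.rext (E.hom Y Z) (E.hom Y Y) =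
        Q.comp (Q.rext (E.hom Y Z) (E.hom Y Y)) (Q.one (E.ext Y)) := (Q.comp_one _).symm
    rw [h1]
    exact le_trans (Quantaloid.comp_le_comp_right _ (E.id_le Y)) (aux_comp_rext_le _ _)
  · exact le_iInf fun W => Quantaloid.le_rext_iff.mpr (E.comp_le W Y Z)

end Aux

theorem stmt8 {Obj : Type u} {Q : Quantaloid.{u, v} Obj} (E : QCat.{u, v, w} Q)
    (ht : Tensored E) (hcc : ConicallyCocomplete E) :
    (∀ φ : Presheaf E, ∃ Y : E.Ob, IsSup E φ Y) ∧
    (∀ (φ : Presheaf E) (t : E.Ob → E.Ob) (e : ∀ X : E.Ob, E.ext (t X) = φ.ext)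
      (htt : ∀ X : E.Ob, IsTensor E X (φ.arr X) (t X))
      (ψ : Presheaf E) (hψe : ψ.ext = φ.ext)
      (hψ : ∀ W : E.Ob, ψ.arr W = Q.cast2 rfl hψe.symm
        (⨆ X : E.Ob, Q.cast2 rfl (e X) (E.hom W (t X))))
      (Y0 : E.Ob), IsSup E ψ Y0 → IsSup E φ Y0) := by
  have cast_refl : ∀ {S T : Obj} (h : S = S) (h2 : T = T) (u : Q.Hom S T),
      Q.cast2 h h2 u = u := fun _ _ _ => rfl
  have part2 : ∀ (φ : Presheaf E) (t : E.Ob → E.Ob) (e : ∀ X : E.Ob, E.ext (t X) = φ.ext)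
      (htt : ∀ X : E.Ob, IsTensor E X (φ.arr X) (t X))
      (ψ : Presheaf E) (hψe : ψ.ext = φ.ext)
      (hψ : ∀ W : E.Ob, ψ.arr W = Q.cast2 rfl hψe.symm
        (⨆ X : E.Ob, Q.cast2 rfl (e X) (E.hom W (t X))))
      (Y0 : E.Ob), IsSup E ψ Y0 → IsSup E φ Y0 := by
    rintro ⟨T, φa, φc⟩ t e htt ⟨Sψ, ψa, ψc⟩ hψe hψ Y0 hY0
    dsimp at e htt hψe hψ hY0 ⊢
    subst hψe
    obtain ⟨h0, hsup⟩ := hY0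
    dsimp at h0 hsup
    subst h0
    refine ⟨rfl, fun Z => ?_⟩
    have key : ∀ W : E.Ob, Q.rext (E.hom W Z) (ψa W) =
        ⨅ X : E.Ob, Q.cast2 (e X) rfl (Q.rext (E.hom W Z) (E.hom W (t X))) := by
      intro W
      rw [hψ W, cast_refl, aux_rext_iSup]
      exact iInf_congr fun X => aux_rext_cast (e X) _ _
    calc Q.cast2 rfl rfl (E.hom Y0 Z)
        = ⨅ W : E.Ob, Q.rext (E.hom W Z) (ψa W) := hsup Z
      _ = ⨅ W : E.Ob, ⨅ X : E.Ob,
            Q.cast2 (e X) rfl (Q.rext (E.hom W Z) (E.hom W (t X))) := iInf_congr key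
      _ = ⨅ X : E.Ob, ⨅ W : E.Ob,
            Q.cast2 (e X) rfl (Q.rext (E.hom W Z) (E.hom W (t X))) := iInf_comm
      _ = ⨅ X : E.Ob, Q.cast2 (e X) rfl
            (⨅ W : E.Ob, Q.rext (E.hom W Z) (E.hom W (t X))) :=
          iInf_congr fun X => (aux_cast2_iInf (e X) _).symm
      _ = ⨅ X : E.Ob, Q.cast2 (e X) rfl (E.hom (t X) Z) :=
          iInf_congr fun X => congrArg _ (aux_yoneda E (t X) Z)
      _ = ⨅ X : E.Ob, Q.rext (E.hom X Z) (φa X) := by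
          refine iInf_congr fun X => ?_
          obtain ⟨hx, hxeq⟩ := htt X
          exact hxeq Z
  refine ⟨fun φ => ?_, part2⟩
  choose t htt using fun X => ht X φ.ext (φ.arr X)
  have e : ∀ X : E.Ob, E.ext (t X) = φ.ext := fun X => ((htt X).choose).symm
  let ψ : Presheaf E :=
    { ext := φ.ext
      arr := fun W => ⨆ X : E.Ob, Q.cast2 rfl (e X) (E.hom W (t X))
      compat := by
        intro W W'
        rw [aux_iSup_comp]
        refine iSup_le fun X => ?_
        rw [aux_comp_cast_left]
        exact le_trans (aux_cast2_mono rfl (e X) (E.comp_le W' W (t X)))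
          (le_iSup (fun X => Q.cast2 rfl (e X) (E.hom W' (t X))) X) }
  obtain ⟨Y0, hY0⟩ := hcc φ.ext E.Ob t e ψ rfl (fun X => rfl)
  exact ⟨Y0, part2 φ t e htt ψ rfl (fun W => rfl) Y0 hY0⟩
end

section
/- Adjoint Functor Theorem for Q-categories: if E is tensored and order-complete, then a Q-functor F : E → D has a right adjoint if and only if F preserves tensors (F(u⋆X) ≅ u⋆FX) and each restriction F_T : E_T → D_T to the fibres preserves arbitrary joins in the underlying order. -/
/-! Common framework: quantaloids and quantaloid-enriched categories. -/

universe u v w w₂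

variable {Obj : Type u} {Q : Quantaloid.{u, v} Obj}

/-! ### Auxiliary cast2 API -/

namespace Quantaloid

variable {Obj : Type u} {Q : Quantaloid.{u, v} Obj}

@[simp] theorem cast2_rfl {S T : Obj} (u : Q.Hom S T) : Q.cast2 rfl rfl u = u := rfl

theorem cast2_cast2 {S S' S'' T T' T'' : Obj} (h1 : S = S') (h2 : T = T')
    (h3 : S' = S'') (h4 : T' = T'') (u : Q.Hom S T) :
    Q.cast2 h3 h4 (Q.cast2 h1 h2 u) = Q.cast2 (h1.trans h3) (h2.trans h4) u := by
  subst h1; subst h2; subst h3; subst h4; rfl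

theorem cast2_le_cast2 {S S' T T' : Obj} (hS : S = S') (hT : T = T')
    {u v : Q.Hom S T} (h : u ≤ v) : Q.cast2 hS hT u ≤ Q.cast2 hS hT v := by
  subst hS; subst hT; exact h

theorem cast2_le_iff {S S' T T' : Obj} (hS : S = S') (hT : T = T')
    {u : Q.Hom S T} {v : Q.Hom S' T'} :
    Q.cast2 hS hT u ≤ v ↔ u ≤ Q.cast2 hS.symm hT.symm v := by
  subst hS; subst hT; rfl

theorem le_cast2_iff {S S' T T' : Obj} (hS : S = S') (hT : T = T')
    {u : Q.Hom S' T'} {v : Q.Hom S T} :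
    u ≤ Q.cast2 hS hT v ↔ Q.cast2 hS.symm hT.symm u ≤ v := by
  subst hS; subst hT; rfl

theorem cast2_eq_iff {S S' T T' : Obj} (hS : S = S') (hT : T = T')
    {u : Q.Hom S T} {v : Q.Hom S' T'} :
    Q.cast2 hS hT u = v ↔ u = Q.cast2 hS.symm hT.symm v := by
  subst hS; subst hT; rfl

theorem cast2_comp {S S' T T' U U' : Obj} (hS : S = S') (hT : T = T') (hU : U = U')
    (v : Q.Hom T U) (u : Q.Hom S T) :
    Q.cast2 hS hU (Q.comp v u) = Q.comp (Q.cast2 hT hU v) (Q.cast2 hS hT u) := by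
  subst hS; subst hT; subst hU; rfl

theorem cast2_self {S T : Obj} (h : S = S) (h' : T = T) (u : Q.Hom S T) :
    Q.cast2 h h' u = u := rfl

theorem cast2_one {S S' : Obj} (h h' : S = S') : Q.cast2 h h' (Q.one S) = Q.one S' := by
  subst h; rfl

theorem cast2_one_eq_cast2_one {S T U V : Obj} (h1 : S = U) (h2 : S = V) (h3 : T = U)
    (h4 : T = V) : Q.cast2 h1 h2 (Q.one S) = Q.cast2 h3 h4 (Q.one T) := by
  subst h1; subst h2; subst h3; rfl

theorem cast2_rext {S S' T T' U U' : Obj} (hS : S = S') (hT : T = T') (hU : U = U')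
    (w : Q.Hom S U) (u : Q.Hom S T) :
    Q.cast2 hT hU (Q.rext w u) = Q.rext (Q.cast2 hS hU w) (Q.cast2 hS hT u) := by
  subst hS; subst hT; subst hU; rfl

theorem cast2_iInf {S S' T T' : Obj} (hS : S = S') (hT : T = T')
    {ι : Sort*} (f : ι → Q.Hom S T) :
    Q.cast2 hS hT (⨅ i, f i) = ⨅ i, Q.cast2 hS hT (f i) := by
  subst hS; subst hT; rfl

theorem cast2_heq {S S' T T' : Obj} (hS : S = S') (hT : T = T') (u : Q.Hom S T) :
    HEq (Q.cast2 hS hT u) u := by subst hS; subst hT; rfl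

theorem heq_of_cast2_eq {S S' T T' : Obj} {hS : S = S'} {hT : T = T'}
    {u : Q.Hom S T} {v : Q.Hom S' T'} (h : Q.cast2 hS hT u = v) : HEq u v := by
  subst hS; subst hT; exact heq_of_eq h

theorem cast2_eq_of_heq {S S' T T' : Obj} (hS : S = S') (hT : T = T')
    {u : Q.Hom S T} {v : Q.Hom S' T'} (h : HEq u v) : Q.cast2 hS hT u = v := by
  subst hS; subst hT; exact eq_of_heq h

theorem heq_of_cast2_eq_cast2 {S1 S2 S T1 T2 T : Obj} {h1 : S1 = S} {h2 : T1 = T}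
    {h3 : S2 = S} {h4 : T2 = T} {u : Q.Hom S1 T1} {v : Q.Hom S2 T2}
    (h : Q.cast2 h1 h2 u = Q.cast2 h3 h4 v) : HEq u v := by
  subst h1; subst h2; subst h3; subst h4; exact heq_of_eq h

theorem heq_rext {S S' T T' U U' : Obj} (hS : S = S') (hT : T = T') (hU : U = U')
    {w : Q.Hom S U} {w' : Q.Hom S' U'} (hw : HEq w w')
    {u : Q.Hom S T} {u' : Q.Hom S' T'} (hu : HEq u u') :
    HEq (Q.rext w u) (Q.rext w' u') := by
  subst hS; subst hT; subst hU; rw [eq_of_heq hw, eq_of_heq hu]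

theorem heq_comp {S S' T T' U U' : Obj} (hS : S = S') (hT : T = T') (hU : U = U')
    {v : Q.Hom T U} {v' : Q.Hom T' U'} (hv : HEq v v')
    {u : Q.Hom S T} {u' : Q.Hom S' T'} (hu : HEq u u') :
    HEq (Q.comp v u) (Q.comp v' u') := by
  subst hS; subst hT; subst hU; rw [eq_of_heq hv, eq_of_heq hu]

theorem heq_one {S S' : Obj} (h : S = S') : HEq (Q.one S) (Q.one S') := by subst h; rfl

theorem heq_le_heq {S S' T T' : Obj} (hS : S = S') (hT : T = T')
    {u : Q.Hom S T} {u' : Q.Hom S' T'} (hu : HEq u u')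
    {v : Q.Hom S T} {v' : Q.Hom S' T'} (hv : HEq v v') : u ≤ v ↔ u' ≤ v' := by
  subst hS; subst hT; rw [eq_of_heq hu, eq_of_heq hv]

theorem cast2_eq_comp_one {S T U : Obj} (c : T = U) (x : Q.Hom S T) :
    Q.cast2 rfl c x = Q.comp (Q.cast2 c.symm rfl (Q.one U)) x := by
  subst c; exact (Q.one_comp x).symm

theorem comp_cast2_one' {S T U : Obj} (c : S = T) (x : Q.Hom T U) :
    Q.comp x (Q.cast2 c.symm rfl (Q.one T)) = Q.cast2 c.symm rfl x := by
  subst c; exact Q.comp_one x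

theorem le_comp_of_one_le {S T : Obj} {y : Q.Hom T T} (h : Q.one T ≤ y) (x : Q.Hom S T) :
    x ≤ Q.comp y x :=
  le_trans (le_of_eq (Q.one_comp x).symm) (comp_le_comp_left h x)

theorem cast2_irrel {S S' T T' : Obj} (h1 h2 : S = S') (h3 h4 : T = T')
    (u : Q.Hom S T) : Q.cast2 h1 h3 u = Q.cast2 h2 h4 u := rfl

end Quantaloid

open Quantaloid

section AFT

variable {Obj : Type u} {Q : Quantaloid.{u, v} Obj} {E D : QCat.{u, v, w} Q} (F : QFun E D)

/-- Reformulated adjunction: `E(X, GY)` in terms of `D(FX, Y)`. -/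
theorem radj_hom_eq (A : RAdj F) (X : E.Ob) (Z : D.Ob) :
    E.hom X (A.G Z) = Q.cast2 (F.ext_eq X).symm (A.ext_eq Z) (D.hom (F.obj X) Z) := by
  have h := A.adj X Z
  rw [cast2_eq_iff] at h
  rw [h, cast2_cast2]

/-- The counit inequality `1 ≤ D(F(GY), Y)`. -/
theorem radj_counit (A : RAdj F) (Z : D.Ob) :
    Q.one (D.ext Z) ≤
      Q.cast2 ((A.ext_eq Z).trans (F.ext_eq (A.G Z))).symm rfl (D.hom (F.obj (A.G Z)) Z) := by
  have h := radj_hom_eq F A (A.G Z) Z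
  have h1 := E.id_le (A.G Z)
  rw [h, le_cast2_iff] at h1
  rw [le_cast2_iff]
  exact le_trans (le_of_eq (cast2_one_eq_cast2_one _ _ _ _)) h1

theorem radj_preserves_tensor (A : RAdj F) (X : E.Ob) (T : Obj) (u : Q.Hom (E.ext X) T)
    (Y : E.Ob) (h : IsTensor E X u Y) :
    IsTensor D (F.obj X) (Q.cast2 (F.ext_eq X) rfl u) (F.obj Y) := by
  obtain ⟨hT, hY⟩ := h
  refine ⟨hT.trans (F.ext_eq Y), fun Z => ?_⟩
  apply cast2_eq_of_heq
  have e1 : HEq (E.hom Y (A.G Z)) (D.hom (F.obj Y) Z) := by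
    rw [radj_hom_eq F A Y Z]; exact cast2_heq _ _ _
  have e2 : HEq (E.hom X (A.G Z)) (D.hom (F.obj X) Z) := by
    rw [radj_hom_eq F A X Z]; exact cast2_heq _ _ _
  have e3 : HEq (E.hom Y (A.G Z)) (Q.rext (E.hom X (A.G Z)) u) :=
    heq_of_cast2_eq (hY (A.G Z))
  exact (e1.symm.trans e3).trans
    (heq_rext (F.ext_eq X) rfl (A.ext_eq Z).symm e2 (cast2_heq (F.ext_eq X) rfl u).symm)

theorem radj_preserves_joins (A : RAdj F) (T : Obj) (s : Set (Fib E T)) (Y : Fib E T)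
    (hj : IsFibJoin s Y) :
    IsFibJoin
      ((fun X : Fib E T => (⟨F.obj X.1, (F.ext_eq X.1).symm.trans X.2⟩ : Fib D T)) '' s)
      ⟨F.obj Y.1, (F.ext_eq Y.1).symm.trans Y.2⟩ := by
  constructor
  · rintro W ⟨X, hXs, rfl⟩
    have h1 : fibLE X Y := hj.1 X hXs
    unfold fibLE at h1 ⊢
    refine le_trans h1 ?_
    have h2 := cast2_le_cast2 (Q := Q) X.2 Y.2 (F.le_hom X.1 Y.1)
    rwa [cast2_cast2] at h2
  · intro Z hZ
    have hub : ∀ X ∈ s, fibLE X (⟨A.G Z.1, (A.ext_eq Z.1).symm.trans Z.2⟩ : Fib E T) := by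
      intro X hX
      have h3 := hZ _ ⟨X, hX, rfl⟩
      unfold fibLE at h3 ⊢
      rw [radj_hom_eq F A, cast2_cast2]
      exact h3
    have h4 := hj.2 _ hub
    unfold fibLE at h4 ⊢
    rw [radj_hom_eq F A, cast2_cast2] at h4
    exact h4

/-! ### Construction of the right adjoint -/

/-- The tensor `D(FX,Y) ⋆ X`, as an object of the fibre of `E` over `D.ext Y`. -/
noncomputable def tensorFib (ht : Tensored E) (Y : D.Ob) (X : E.Ob) : Fib E (D.ext Y) :=
  ⟨(ht X (D.ext Y) (Q.cast2 (F.ext_eq X).symm rfl (D.hom (F.obj X) Y))).choose,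
   ((ht X (D.ext Y) (Q.cast2 (F.ext_eq X).symm rfl (D.hom (F.obj X) Y))).choose_spec.choose).symm⟩

theorem tensorFib_spec (ht : Tensored E) (Y : D.Ob) (X : E.Ob) :
    IsTensor E X (Q.cast2 (F.ext_eq X).symm rfl (D.hom (F.obj X) Y)) (tensorFib F ht Y X).1 :=
  (ht X (D.ext Y) (Q.cast2 (F.ext_eq X).symm rfl (D.hom (F.obj X) Y))).choose_spec

/-- The candidate value of the right adjoint at `Y`. -/
noncomputable def candG (ht : Tensored E) (hoc : OrderComplete E) (Y : D.Ob) :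
    Fib E (D.ext Y) :=
  (hoc (D.ext Y) (Set.range (tensorFib F ht Y))).choose

theorem candG_spec (ht : Tensored E) (hoc : OrderComplete E) (Y : D.Ob) :
    IsFibJoin (Set.range (tensorFib F ht Y)) (candG F ht hoc Y) :=
  (hoc (D.ext Y) (Set.range (tensorFib F ht Y))).choose_spec

variable (hpt : ∀ (X : E.Ob) (T : Obj) (u : Q.Hom (E.ext X) T) (Y : E.Ob),
      IsTensor E X u Y → IsTensor D (F.obj X) (Q.cast2 (F.ext_eq X) rfl u) (F.obj Y))
  (hpj : ∀ (T : Obj) (s : Set (Fib E T)) (Y : Fib E T), IsFibJoin s Y →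
      IsFibJoin
        ((fun X : Fib E T => (⟨F.obj X.1, (F.ext_eq X.1).symm.trans X.2⟩ : Fib D T)) '' s)
        ⟨F.obj Y.1, (F.ext_eq Y.1).symm.trans Y.2⟩)

include hpt hpj

theorem cand_counit (ht : Tensored E) (hoc : OrderComplete E) (Y : D.Ob) :
    Q.one (D.ext Y) ≤
      Q.cast2 ((F.ext_eq (candG F ht hoc Y).1).symm.trans (candG F ht hoc Y).2) rfl
        (D.hom (F.obj (candG F ht hoc Y).1) Y) := by
  have hub : ∀ W ∈ (fun X : Fib E (D.ext Y) =>
      (⟨F.obj X.1, (F.ext_eq X.1).symm.trans X.2⟩ : Fib D (D.ext Y))) ''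
        Set.range (tensorFib F ht Y), fibLE W ⟨Y, rfl⟩ := by
    rintro W ⟨V, ⟨X0, rfl⟩, rfl⟩
    unfold fibLE
    obtain ⟨hT0, hspec0⟩ := hpt X0 (D.ext Y) _ _ (tensorFib_spec F ht Y X0)
    have h5 : Q.one (D.ext Y) ≤
        Q.cast2 hT0.symm rfl (D.hom (F.obj (tensorFib F ht Y X0).1) Y) := by
      rw [hspec0 Y, Quantaloid.le_rext_iff, Q.one_comp, cast2_cast2, cast2_self]
    exact h5
  have h6 := (hpj (D.ext Y) _ _ (candG_spec F ht hoc Y)).2 ⟨Y, rfl⟩ hub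
  exact h6

theorem cand_adj (ht : Tensored E) (hoc : OrderComplete E) (Y : D.Ob) (X : E.Ob) :
    Q.cast2 rfl (candG F ht hoc Y).2 (E.hom X (candG F ht hoc Y).1) =
      Q.cast2 (F.ext_eq X).symm rfl (D.hom (F.obj X) Y) := by
  refine le_antisymm ?_ ?_
  · -- uses preservation via the counit
    have h7 := cast2_le_cast2 (Q := Q) rfl (candG F ht hoc Y).2
      (F.le_hom X (candG F ht hoc Y).1)
    rw [cast2_cast2] at h7
    have h8 : Q.cast2 (rfl : D.ext (F.obj X) = D.ext (F.obj X))
        ((F.ext_eq (candG F ht hoc Y).1).symm.trans (candG F ht hoc Y).2)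
        (D.hom (F.obj X) (F.obj (candG F ht hoc Y).1)) ≤ D.hom (F.obj X) Y := by
      rw [cast2_eq_comp_one]
      refine le_trans (comp_le_comp_left ?_ _)
        (D.comp_le (F.obj X) (F.obj (candG F ht hoc Y).1) Y)
      have hcu := cand_counit F hpt hpj ht hoc Y
      rw [le_cast2_iff] at hcu
      exact hcu
    have h9 := cast2_le_cast2 (Q := Q) (F.ext_eq X).symm rfl h8
    rw [cast2_cast2] at h9
    exact le_trans h7 h9
  · -- uses the tensor and the join
    have h10 := (candG_spec F ht hoc Y).1 _ ⟨X, rfl⟩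
    unfold fibLE at h10
    have hspec := (tensorFib_spec F ht Y X).choose_spec (candG F ht hoc Y).1
    have h11 : Q.one (D.ext Y) ≤ Q.cast2 rfl (candG F ht hoc Y).2
        (Q.rext (E.hom X (candG F ht hoc Y).1)
          (Q.cast2 (F.ext_eq X).symm rfl (D.hom (F.obj X) Y))) := by
      rw [← hspec, cast2_cast2]
      exact h10
    refine le_trans (le_comp_of_one_le h11 _) ?_
    have h12 := cast2_comp (Q := Q) rfl rfl (candG F ht hoc Y).2
      (Q.rext (E.hom X (candG F ht hoc Y).1)
        (Q.cast2 (F.ext_eq X).symm rfl (D.hom (F.obj X) Y)))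
      (Q.cast2 (F.ext_eq X).symm rfl (D.hom (F.obj X) Y))
    rw [cast2_rfl] at h12
    rw [← h12]
    exact cast2_le_cast2 rfl (candG F ht hoc Y).2 (Quantaloid.le_rext_iff.mp le_rfl)

theorem exists_radj (ht : Tensored E) (hoc : OrderComplete E) : Nonempty (RAdj F) := by
  refine ⟨⟨fun Y => (candG F ht hoc Y).1, fun Y => (candG F ht hoc Y).2.symm, ?_, ?_⟩⟩
  · intro Y Y'
    have hcu := cand_counit F hpt hpj ht hoc Y
    rw [le_cast2_iff] at hcu
    have h14 : Q.comp (D.hom Y Y')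
        (Q.cast2 ((F.ext_eq (candG F ht hoc Y).1).symm.trans (candG F ht hoc Y).2).symm rfl
          (Q.one (D.ext Y))) ≤ D.hom (F.obj (candG F ht hoc Y).1) Y' :=
      le_trans (Quantaloid.comp_le_comp_right _ hcu)
        (D.comp_le (F.obj (candG F ht hoc Y).1) Y Y')
    rw [comp_cast2_one' ((F.ext_eq (candG F ht hoc Y).1).symm.trans (candG F ht hoc Y).2)] at h14
    rw [cast2_le_iff] at h14
    have h15 : Q.cast2 (candG F ht hoc Y).2.symm.symm (candG F ht hoc Y').2.symm.symm
        (E.hom (candG F ht hoc Y).1 (candG F ht hoc Y').1) =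
        Q.cast2 (((F.ext_eq (candG F ht hoc Y).1).symm.trans (candG F ht hoc Y).2).symm).symm
          rfl (D.hom (F.obj (candG F ht hoc Y).1) Y') :=
      cast2_eq_of_heq _ _
        ((heq_of_cast2_eq_cast2 (cand_adj F hpt hpj ht hoc Y' (candG F ht hoc Y).1)).trans
          (cast2_heq _ _ _).symm)
    rw [h15]
    exact h14
  · intro X Y
    exact cand_adj F hpt hpj ht hoc Y X

end AFT

theorem stmt9 {Obj : Type u} {Q : Quantaloid.{u, v} Obj} (E D : QCat.{u, v, w} Q) (F : QFun E D)
    (ht : Tensored E) (hoc : OrderComplete E) :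
    Nonempty (RAdj F) ↔
      ((∀ (X : E.Ob) (T : Obj) (u : Q.Hom (E.ext X) T) (Y : E.Ob),
          IsTensor E X u Y → IsTensor D (F.obj X) (Q.cast2 (F.ext_eq X) rfl u) (F.obj Y)) ∧
       (∀ (T : Obj) (s : Set (Fib E T)) (Y : Fib E T), IsFibJoin s Y →
          IsFibJoin
            ((fun X : Fib E T => (⟨F.obj X.1, (F.ext_eq X.1).symm.trans X.2⟩ : Fib D T)) '' s)
            ⟨F.obj Y.1, (F.ext_eq Y.1).symm.trans Y.2⟩)) := by
  constructor
  · rintro ⟨A⟩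
    exact ⟨fun X T u Y h => radj_preserves_tensor F A X T u Y h,
           fun T s Y h => radj_preserves_joins F A T s Y h⟩
  · rintro ⟨hpt, hpj⟩
    exact exists_radj F hpt hpj ht hoc
end

section
/- A Q-category E is total if and only if its dual E^op is total (as a Q^op-category); equivalently, E has all suprema of contravariant presheaves if and only if it has all infima of covariant presheaves. -/
/-! Common framework: quantaloids and quantaloid-enriched categories. -/

universe u v w w₂

variable {Obj : Type u} {Q : Quantaloid.{u, v} Obj}

/-! A presheaf on `E.op` is a covariant presheaf `ψ` on `E`. Its infimum in `E` is the supremum of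
the presheaf of its lower bounds, `X ↦ ⋀_{X'} ψ X' ↘ E(X, X')`. Since `E.op.op` is `E` by
definition, this one implication gives both directions. -/

theorem Quantaloid.one_le_rext_iff {S T : Obj} {w u : Q.Hom S T} :
    Q.one T ≤ Q.rext w u ↔ u ≤ w := by
  rw [Quantaloid.le_rext_iff, Q.one_comp]

def lowerBoundsPresheaf {E : QCat.{u, v, w} Q} (ψ : Presheaf E.op) : Presheaf E where
  ext := ψ.ext
  arr X := ⨅ X' : E.Ob, Q.rlift (ψ.arr X') (E.hom X X')
  compat X X' := le_iInf fun W => Quantaloid.le_rlift_iff.mpr <| by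
    refine (Q.comp_assoc _ _ _).ge.trans
      (le_trans (Quantaloid.comp_le_comp_left ?_ _) (E.comp_le X' X W))
    exact Quantaloid.le_rlift_iff.mp (iInf_le _ W)

theorem isSup_op_of_isSup_lowerBoundsPresheaf {E : QCat.{u, v, w} Q} {ψ : Presheaf E.op}
    {Y : E.Ob} (hY : IsSup E (lowerBoundsPresheaf ψ) Y) : IsSup E.op ψ Y := by
  obtain ⟨T, arr, compat⟩ := ψ
  obtain ⟨h, hsup⟩ := hY
  change T = E.ext Y at h
  subst h
  set φ := lowerBoundsPresheaf ⟨_, arr, compat⟩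
  have hom_eq : ∀ Z, E.hom Y Z = ⨅ X, Q.rext (E.hom X Z) (φ.arr X) := hsup
  have arr_le_hom : ∀ X, arr X ≤ E.hom Y X := fun X => by
    rw [hom_eq X]
    exact le_iInf fun X' => (Quantaloid.le_rext_iff (Q := Q)).mpr
      ((Quantaloid.le_rlift_iff (Q := Q)).mp (iInf_le _ X))
  have lowerBounds_le_hom : ∀ Z, φ.arr Z ≤ E.hom Z Y :=
    fun Z => Quantaloid.one_le_rext_iff.mp <|
      le_trans (E.id_le Y) ((hom_eq Y).trans_le (iInf_le _ Z))
  refine ⟨rfl, fun Z => ?_⟩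
  change E.hom Z Y = ⨅ X, Q.rlift (arr X) (E.hom Z X)
  refine le_antisymm ?_ (lowerBounds_le_hom Z)
  exact le_iInf fun X => (Quantaloid.le_rlift_iff (Q := Q)).mpr <|
    le_trans (Quantaloid.comp_le_comp_left (Q := Q) (arr_le_hom X) _) (E.comp_le Z Y X)

theorem QTotal.op {E : QCat.{u, v, w} Q} (hE : QTotal E) : QTotal E.op := fun ψ =>
  let ⟨Y, hY⟩ := hE (lowerBoundsPresheaf ψ)
  ⟨Y, isSup_op_of_isSup_lowerBoundsPresheaf hY⟩

theorem stmt14 {Obj : Type u} {Q : Quantaloid.{u, v} Obj} (E : QCat.{u, v, w} Q) :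
    QTotal E ↔ QTotal E.op :=
  ⟨QTotal.op, QTotal.op⟩
end

section
/- Given a Q-distributor Φ : E ⇸ B, the Isbell Q-category IΦ, the full subcategory of PE on presheaves φ with Φ↓Φ↑φ = φ, is a full reflective Q-subcategory of PE with reflector Φ↓Φ↑; consequently IΦ is a total Q-category. -/
/-! Common framework: quantaloids and quantaloid-enriched categories. -/

universe u v w w₂

variable {Obj : Type u} {Q : Quantaloid.{u, v} Obj}

/-! `Φ↓Φ↑` is a closure operator on `PE` (since `Φ↑ ⊣ Φ↓` and `Φ↑Φ↓Φ↑ = Φ↑`), and maps into the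
presheaves `ψ` with `Φ↓Φ↑ψ = ψ`. Since `Φ↑` is a `Q`-functor, a morphism `φ → ψ` with `ψ` closed
factors uniquely through `Φ↓Φ↑φ`, so the closed presheaves form a reflective subcategory of `PE`.
A presheaf `Ψ` on `IΦ` then has as supremum the closure of its supremum `⋁_φ Ψ(φ) ∘ φ` in `PE`. -/

section IsbellCategory

namespace Quantaloid

theorem comp_iSup {ι : Sort*} {S T U : Obj} (v : Q.Hom T U) (f : ι → Q.Hom S T) :
    Q.comp v (⨆ i, f i) = ⨆ i, Q.comp v (f i) := by
  rw [iSup, Q.comp_sSup]; exact iSup_range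

theorem iSup_comp {ι : Sort*} {S T U : Obj} (f : ι → Q.Hom T U) (u : Q.Hom S T) :
    Q.comp (⨆ i, f i) u = ⨆ i, Q.comp (f i) u := by
  rw [iSup, Q.sSup_comp]; exact iSup_range

theorem le_iInf_rext_iff {ι : Sort*} {T U : Obj} {S : ι → Obj} {w : ∀ i, Q.Hom (S i) U}
    {u : ∀ i, Q.Hom (S i) T} {v : Q.Hom T U} :
    v ≤ ⨅ i, Q.rext (w i) (u i) ↔ ∀ i, Q.comp v (u i) ≤ w i := by
  simp only [le_iInf_iff, le_rext_iff]

theorem le_iInf_rlift_iff {ι : Sort*} {S T : Obj} {U : ι → Obj} {v : ∀ i, Q.Hom T (U i)}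
    {w : ∀ i, Q.Hom S (U i)} {u : Q.Hom S T} :
    u ≤ ⨅ i, Q.rlift (v i) (w i) ↔ ∀ i, Q.comp (v i) u ≤ w i := by
  simp only [le_iInf_iff, le_rlift_iff]

end Quantaloid

open Quantaloid

variable {E B : QCat.{u, v, w} Q}

theorem QDist.d_comp_hom_le (Φ : QDist E B) (X X' : E.Ob) (Y : B.Ob) :
    Q.comp (Φ.d X Y) (E.hom X' X) ≤ Φ.d X' Y :=
  calc Q.comp (Φ.d X Y) (E.hom X' X)
      = Q.comp (Q.one (B.ext Y)) (Q.comp (Φ.d X Y) (E.hom X' X)) := (Q.one_comp _).symm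
    _ ≤ Q.comp (B.hom Y Y) (Q.comp (Φ.d X Y) (E.hom X' X)) := comp_le_comp_left (B.id_le Y) _
    _ ≤ Φ.d X' Y := Φ.compat X X' Y Y

theorem le_PEhom_iff {φ ψ : Presheaf E} {a : Q.Hom φ.ext ψ.ext} :
    a ≤ PEhom φ ψ ↔ ∀ X, Q.comp a (φ.arr X) ≤ ψ.arr X :=
  le_iInf_rext_iff

theorem PEhom_comp_arr_le (φ ψ : Presheaf E) (X : E.Ob) :
    Q.comp (PEhom φ ψ) (φ.arr X) ≤ ψ.arr X :=
  le_PEhom_iff.mp le_rfl X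

namespace Presheaf

/-- The join-composite `⋁ᵢ aᵢ ∘ φᵢ`; for a presheaf on a full subcategory of `PE` this is its
supremum in `PE`. -/
def weightedSup {ι : Type*} {T : Obj} (φ : ι → Presheaf E) (a : ∀ i, Q.Hom (φ i).ext T) :
    Presheaf E where
  ext := T
  arr X := ⨆ i, Q.comp (a i) ((φ i).arr X)
  compat X X' := by
    rw [iSup_comp]
    refine iSup_mono fun i => ?_
    rw [Q.comp_assoc]
    exact comp_le_comp_right _ ((φ i).compat X X')

theorem PEhom_weightedSup {ι : Type*} {T : Obj} (φ : ι → Presheaf E)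
    (a : ∀ i, Q.Hom (φ i).ext T) (ψ : Presheaf E) :
    PEhom (weightedSup φ a) ψ = ⨅ i, Q.rext (PEhom (φ i) ψ) (a i) := by
  refine le_antisymm (le_iInf_rext_iff.mpr fun i => le_PEhom_iff.mpr fun X => ?_)
    (le_PEhom_iff.mpr fun X => ?_)
  · refine (Q.comp_assoc _ _ _).trans_le ?_
    exact le_trans (comp_le_comp_right _ (le_iSup (fun i => Q.comp (a i) ((φ i).arr X)) i))
      (PEhom_comp_arr_le _ ψ X)
  · show Q.comp _ (⨆ i, Q.comp (a i) ((φ i).arr X)) ≤ ψ.arr X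
    rw [comp_iSup]
    refine iSup_le fun i => ?_
    rw [← Q.comp_assoc]
    exact le_trans (comp_le_comp_left (le_rext_iff.mp (iInf_le _ i)) _)
      (PEhom_comp_arr_le (φ i) ψ X)

end Presheaf

variable (Φ : QDist E B)

/-- `Φ↑φ`, as the family of its components; `isbell Φ φ` is `Φ↓(Φ↑φ)`. -/
def isbellUp (φ : Presheaf E) (Y : B.Ob) : Q.Hom φ.ext (B.ext Y) :=
  ⨅ X : E.Ob, Q.rext (Φ.d X Y) (φ.arr X)

variable {Φ}

theorem le_isbellUp_iff {φ : Presheaf E} {Y : B.Ob} {b : Q.Hom φ.ext (B.ext Y)} :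
    b ≤ isbellUp Φ φ Y ↔ ∀ X, Q.comp b (φ.arr X) ≤ Φ.d X Y :=
  le_iInf_rext_iff

theorem le_isbell_iff {φ : Presheaf E} {X : E.Ob} {a : Q.Hom (E.ext X) φ.ext} :
    a ≤ isbell Φ φ X ↔ ∀ Y, Q.comp (isbellUp Φ φ Y) a ≤ Φ.d X Y :=
  le_iInf_rlift_iff

theorem isbellUp_comp_isbell_le (φ : Presheaf E) (X : E.Ob) (Y : B.Ob) :
    Q.comp (isbellUp Φ φ Y) (isbell Φ φ X) ≤ Φ.d X Y :=
  le_isbell_iff.mp le_rfl Y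

theorem arr_le_isbell (φ : Presheaf E) (X : E.Ob) : φ.arr X ≤ isbell Φ φ X :=
  le_isbell_iff.mpr fun _ => le_isbellUp_iff.mp le_rfl X

theorem isbellUp_comp_PEhom_le (φ ψ : Presheaf E) (Y : B.Ob) :
    Q.comp (isbellUp Φ ψ Y) (PEhom φ ψ) ≤ isbellUp Φ φ Y :=
  le_isbellUp_iff.mpr fun X => by
    rw [Q.comp_assoc]
    exact le_trans (comp_le_comp_right _ (PEhom_comp_arr_le φ ψ X)) (le_isbellUp_iff.mp le_rfl X)

variable (Φ)

def isbellClosure (φ : Presheaf E) : Presheaf E where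
  ext := φ.ext
  arr := isbell Φ φ
  compat X X' := le_isbell_iff.mpr fun Y => by
    rw [← Q.comp_assoc]
    exact le_trans (comp_le_comp_left (isbellUp_comp_isbell_le φ X Y) _) (Φ.d_comp_hom_le X X' Y)

theorem isbellUp_isbellClosure (φ : Presheaf E) (Y : B.Ob) :
    isbellUp Φ (isbellClosure Φ φ) Y = isbellUp Φ φ Y := by
  refine le_antisymm ((le_isbellUp_iff (φ := φ)).mpr fun X => ?_)
    (le_isbellUp_iff.mpr fun X => isbellUp_comp_isbell_le φ X Y)
  exact le_trans (comp_le_comp_right _ (arr_le_isbell φ X))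
    (le_isbellUp_iff.mp le_rfl X : Q.comp _ ((isbellClosure Φ φ).arr X) ≤ _)

theorem isbell_isbellClosure (φ : Presheaf E) (X : E.Ob) :
    isbell Φ (isbellClosure Φ φ) X = (isbellClosure Φ φ).arr X := by
  show ⨅ Y, Q.rlift (isbellUp Φ (isbellClosure Φ φ) Y) (Φ.d X Y) =
    ⨅ Y, Q.rlift (isbellUp Φ φ Y) (Φ.d X Y)
  simp only [isbellUp_isbellClosure]
  rfl

theorem PEhom_isbellClosure (φ : Presheaf E) {ψ : Presheaf E}
    (hψ : ∀ X : E.Ob, isbell Φ ψ X = ψ.arr X) :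
    PEhom (isbellClosure Φ φ) ψ = PEhom φ ψ := by
  refine le_antisymm ((le_PEhom_iff (φ := φ)).mpr fun X => ?_) (le_PEhom_iff.mpr fun X => ?_)
  · exact le_trans (comp_le_comp_right _ (arr_le_isbell φ X))
      (PEhom_comp_arr_le (isbellClosure Φ φ) ψ X)
  · show Q.comp (PEhom φ ψ) (isbell Φ φ X) ≤ ψ.arr X
    rw [← hψ X]
    refine le_isbell_iff.mpr fun Y => ?_
    rw [← Q.comp_assoc]
    exact le_trans (comp_le_comp_left (isbellUp_comp_PEhom_le φ ψ Y) _)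
      (isbellUp_comp_isbell_le φ X Y)

theorem isSup_ICat (Ψ : Presheaf (ICat Φ)) :
    IsSup (ICat Φ) Ψ
      ⟨isbellClosure Φ (Presheaf.weightedSup (fun φ : (ICat Φ).Ob => φ.1) Ψ.arr),
        isbell_isbellClosure Φ _⟩ := by
  refine ⟨rfl, fun Z => ?_⟩
  show PEhom (isbellClosure Φ _) Z.1 = _
  rw [PEhom_isbellClosure Φ _ Z.2]
  exact Presheaf.PEhom_weightedSup (fun φ : (ICat Φ).Ob => φ.1) Ψ.arr Z.1

theorem qTotal_ICat : QTotal (ICat Φ) :=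
  fun Ψ => ⟨_, isSup_ICat Φ Ψ⟩

end IsbellCategory

theorem stmt16 {Obj : Type u} {Q : Quantaloid.{u, v} Obj} (E B : QCat.{u, v, w} Q) (Φ : QDist E B) :
    -- IΦ is a full reflective Q-subcategory of PE with reflector Φ↓Φ↑
    (∀ φ : Presheaf E, ∃ (φ' : Presheaf E) (h : φ'.ext = φ.ext),
      (∀ X : E.Ob, Q.cast2 rfl h (φ'.arr X) = isbell Φ φ X) ∧
      (∀ X : E.Ob, isbell Φ φ' X = φ'.arr X) ∧
      (∀ ψ : Presheaf E, (∀ X : E.Ob, isbell Φ ψ X = ψ.arr X) →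
        Q.cast2 h rfl (PEhom φ' ψ) = PEhom φ ψ)) ∧
    -- consequently IΦ is total
    QTotal (ICat Φ) :=
  ⟨fun φ => ⟨isbellClosure Φ φ, rfl, fun _ => rfl, isbell_isbellClosure Φ φ,
    fun _ hψ => PEhom_isbellClosure Φ φ hψ⟩, qTotal_ICat Φ⟩
end
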